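/- Let σ be a doubling measure on ℝⁿ. Then there is a constant C, depending only on n and the doubling constant of σ, such that for every cube Q in ℝⁿ and every 0 < δ < 1, |Q ∖ (1−δ)Q|_σ ≤ (C / ln(1/δ)) · |Q|_σ. -/

import Mathlib

open MeasureTheory Set Function
open scoped ENNReal NNReal

noncomputable section

/-- `ℝⁿ` with the Euclidean metric. -/
abbrev Rn (n : ℕ) : Type := EuclideanSpace ℝ (Fin n)

/-- The closed axes-parallel cube with center `c` and side length `l`. -/
def Cube {n : ℕ} (c : Rn n) (l : ℝ) : Set (Rn n) :=
  {x | ∀ i, |x i - c i| ≤ l / 2}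

/-- `μ` is doubling with doubling constant `D`: `|2Q|_μ ≤ D |Q|_μ` for all cubes `Q`. -/
def DoublingWith {n : ℕ} (μ : Measure (Rn n)) (D : ℝ) : Prop :=
  ∀ (c : Rn n) (l : ℝ), 0 < l → μ (Cube c (2 * l)) ≤ ENNReal.ofReal D * μ (Cube c l)

/-- `μ` has doubling exponent `θ`: `|2^{-k}Q|_μ ≥ 2^{-θ k}|Q|_μ` for all cubes `Q`, `k ∈ ℕ`. -/
def HasDoublingExp {n : ℕ} (μ : Measure (Rn n)) (θ : ℝ) : Prop :=
  ∀ (c : Rn n) (l : ℝ) (k : ℕ), 0 < l →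
    ENNReal.ofReal ((2 : ℝ) ^ (-(θ * (k : ℝ)))) * μ (Cube c l) ≤
      μ (Cube c ((2 : ℝ) ^ (-(k : ℝ)) * l))

/-- Coifman–Fefferman comparability with parameters `ε, η`:
for all cubes `Q` and compact `E ⊆ Q`, `|E|_ω/|Q|_ω < ε` implies `|E|_σ/|Q|_σ < η`. -/
def CFComparable {n : ℕ} (σ ω : Measure (Rn n)) (ε η : ℝ) : Prop :=
  ∀ (c : Rn n) (l : ℝ), 0 < l → ∀ E : Set (Rn n), IsCompact E → E ⊆ Cube c l →
    ω E < ENNReal.ofReal ε * ω (Cube c l) → σ E < ENNReal.ofReal η * σ (Cube c l)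

/-!
Write `Q = Cube c l` and `S = Q \ (1 - δ)Q`. For `a ≥ 8δ`, the homothety of ratio `1 - 3a/4`
centred at `c` sends each `x ∈ S` to a point `y` such that the cube of side `al/8` about `y`
lies in the shell `(1 - a/2)Q \ (1 - a)Q`, while `x` lies in the cube of side `3al/4` about `y`.
A Vitali covering by the small cubes and three doublings give `|S| ≤ D³ |(1 - a/2)Q \ (1 - a)Q|`.
For `a = 2^{-k}`, `k < K ≈ log₂(1/δ)`, these shells are disjoint subsets of `Q`, hence
`K |S| ≤ D³ |Q|`.
-/

lemma ENNReal.le_ofReal_div_mul {a b : ℝ≥0∞} {x y : ℝ} (hy : 0 < y)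
    (h : a * ENNReal.ofReal y ≤ ENNReal.ofReal x * b) : a ≤ ENNReal.ofReal (x / y) * b := by
  rw [ENNReal.ofReal_div_of_pos hy, ← ENNReal.mul_div_right_comm]
  exact (ENNReal.le_div_iff_mul_le (.inl (by simpa using hy)) (.inl ENNReal.ofReal_ne_top)).2 h

lemma exists_nat_forall_le_half_pow_and_log_le {δ : ℝ} (hδ : 0 < δ) :
    ∃ K : ℕ, (∀ k < K, δ ≤ (1 / 2) ^ (k + 3)) ∧ Real.log (1 / δ) ≤ 3 * (K + 1) := by
  have hlog2 : 0 < Real.log 2 := Real.log_pos one_lt_two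
  set x := Real.log (1 / δ) / Real.log 2
  refine ⟨⌊x⌋₊ - 2, fun k hk => ?_, ?_⟩
  · have hk3 : ((k + 3 : ℕ) : ℝ) ≤ x := (Nat.le_floor_iff' (by omega)).1 (by omega)
    rw [le_div_iff₀ hlog2, ← Real.log_pow, Real.log_le_log_iff (by positivity) (by positivity)]
      at hk3
    rwa [one_div_pow, le_one_div hδ (by positivity)]
  · have hfloor := Nat.lt_floor_add_one x
    rw [div_lt_iff₀ hlog2] at hfloor
    have hK : (⌊x⌋₊ : ℝ) ≤ ↑(⌊x⌋₊ - 2) + 2 := by exact_mod_cast (by omega)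
    nlinarith [Real.log_two_lt_d9]

section Cube

variable {n : ℕ}

lemma isClosed_cube (c : Rn n) (l : ℝ) : IsClosed (Cube c l) := by
  simp only [Cube, ofPred_forall]
  exact isClosed_iInter fun i => isClosed_le (by fun_prop) continuous_const

lemma measurableSet_cube (c : Rn n) (l : ℝ) : MeasurableSet (Cube c l) :=
  (isClosed_cube c l).measurableSet

lemma interior_cube_nonempty (c : Rn n) {l : ℝ} (hl : 0 < l) : (interior (Cube c l)).Nonempty := by
  refine ⟨c, mem_interior.2 ⟨{x | ∀ i, |x i - c i| < l / 2}, fun x hx i => (hx i).le, ?_,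
    fun i => by simpa using hl⟩⟩
  simp only [ofPred_forall]
  exact isOpen_iInter_of_finite fun i => isOpen_lt (by fun_prop) continuous_const

lemma cube_mono (c : Rn n) {l l' : ℝ} (h : l ≤ l') : Cube c l ⊆ Cube c l' :=
  fun x hx i => (hx i).trans (by linarith)

end Cube

namespace DoublingWith

variable {n : ℕ} {σ : Measure (Rn n)} {D : ℝ}

lemma measure_cube_two_pow_mul_le (hσ : DoublingWith σ D) (y : Rn n) {l : ℝ} (hl : 0 < l)
    (m : ℕ) : σ (Cube y (2 ^ m * l)) ≤ ENNReal.ofReal D ^ m * σ (Cube y l) := by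
  induction m with
  | zero => simp
  | succ m ih =>
    calc σ (Cube y (2 ^ (m + 1) * l)) = σ (Cube y (2 * (2 ^ m * l))) := by ring_nf
      _ ≤ ENNReal.ofReal D * σ (Cube y (2 ^ m * l)) := hσ y _ (by positivity)
      _ ≤ ENNReal.ofReal D * (ENNReal.ofReal D ^ m * σ (Cube y l)) := by gcongr
      _ = ENNReal.ofReal D ^ (m + 1) * σ (Cube y l) := by ring

theorem measure_le_of_forall_mem_cube (hσ : DoublingWith σ D) {S T : Set (Rn n)} {r R : ℝ}
    (hr : 0 < r) (m : ℕ) (hRm : R + 2 * r ≤ 2 ^ m * r)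
    (hST : ∀ x ∈ S, ∃ y, x ∈ Cube y R ∧ Cube y r ⊆ T) :
    σ S ≤ ENNReal.ofReal D ^ m * σ T := by
  choose! y hxy hyT using hST
  -- Vitali with constant radii: a maximal disjoint subfamily of the cubes `Cube (y x) r`
  obtain ⟨u, huS, hdisj, hmeet⟩ := Vitali.exists_disjoint_subfamily_covering_enlargement
    (fun x => Cube (y x) r) S (fun _ => 1) 2 one_lt_two (fun _ _ => zero_le_one) 1
    (fun _ _ => le_rfl) (fun x _ => ⟨y x, fun i => by simp; positivity⟩)
  have hu : u.Countable :=
    hdisj.countable_of_nonempty_interior fun x _ => interior_cube_nonempty _ hr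
  have hcover : S ⊆ ⋃ b ∈ u, Cube (y b) (2 ^ m * r) := by
    intro x hx
    obtain ⟨b, hb, ⟨z, hzx, hzb⟩, -⟩ := hmeet x hx
    refine mem_biUnion hb fun i => ?_
    have h₁ := abs_le.1 (hxy x hx i)
    have h₂ := abs_le.1 (hzx i)
    have h₃ := abs_le.1 (hzb i)
    exact abs_le.2 ⟨by linarith, by linarith⟩
  calc σ S ≤ ∑' b : u, σ (Cube (y b) (2 ^ m * r)) :=
        (measure_mono hcover).trans (measure_biUnion_le σ hu _)
    _ ≤ ∑' b : u, ENNReal.ofReal D ^ m * σ (Cube (y b) r) :=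
        ENNReal.tsum_le_tsum fun b => hσ.measure_cube_two_pow_mul_le _ hr m
    _ = ENNReal.ofReal D ^ m * σ (⋃ b ∈ u, Cube (y b) r) := by
        rw [ENNReal.tsum_mul_left, measure_biUnion hu hdisj fun b _ => measurableSet_cube _ _]
    _ ≤ ENNReal.ofReal D ^ m * σ T := by
        gcongr
        exact iUnion₂_subset fun b hb => hyT b (huS hb)

theorem measure_cube_diff_le (hσ : DoublingWith σ D) (c : Rn n) {l a δ : ℝ}
    (hl : 0 < l) (ha : 0 < a) (ha₁ : a ≤ 1) (hδ : 0 ≤ δ) (hδa : δ ≤ a / 8) :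
    σ (Cube c l \ Cube c ((1 - δ) * l)) ≤
      ENNReal.ofReal D ^ 3 * σ (Cube c ((1 - a / 2) * l) \ Cube c ((1 - a) * l)) := by
  refine hσ.measure_le_of_forall_mem_cube (r := a * l / 8) (R := 3 * a * l / 4)
    (by positivity) 3 (by linarith) ?_
  rintro x ⟨hxQ, hxδ⟩
  set s := 1 - 3 * a / 4 with hs
  have hs₀ : 0 < s := by linarith
  have hxc (i : Fin n) := abs_le.1 (hxQ i)
  refine ⟨c + s • (x - c), fun i => ?_, fun z hz => ?_⟩
  · simp only [PiLp.add_apply, PiLp.smul_apply, PiLp.sub_apply, smul_eq_mul]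
    exact abs_le.2 ⟨by nlinarith [hxc i], by nlinarith [hxc i]⟩
  have hzy (i : Fin n) : |z i - (c i + s * (x i - c i))| ≤ a * l / 8 / 2 := by simpa using hz i
  refine ⟨fun i => abs_le.2 ?_, fun hzδ => hxδ fun i => abs_le.2 ?_⟩
  · have := abs_le.1 (hzy i)
    constructor <;> nlinarith [hxc i]
  · have := abs_le.1 (hzy i)
    have hzc := abs_le.1 (hzδ i)
    have hsδ : s * δ ≤ δ := by nlinarith
    constructor <;> nlinarith

theorem nat_mul_measure_cube_diff_le (hσ : DoublingWith σ D) (c : Rn n) {l δ : ℝ} (hl : 0 < l)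
    (hδ : 0 ≤ δ) {K : ℕ} (hK : ∀ k < K, δ ≤ (1 / 2) ^ (k + 3)) :
    K * σ (Cube c l \ Cube c ((1 - δ) * l)) ≤ ENNReal.ofReal D ^ 3 * σ (Cube c l) := by
  set A : ℕ → Set (Rn n) := fun k => Cube c ((1 - (1 / 2) ^ k) * l)
  have hA : Monotone A := fun i j hij => cube_mono c <| mul_le_mul_of_nonneg_right
    (by linarith [pow_le_pow_of_le_one (by norm_num : (0 : ℝ) ≤ 1 / 2) (by norm_num) hij]) hl.le
  have hAQ (k : ℕ) : A k ⊆ Cube c l :=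
    cube_mono c (by nlinarith [pow_pos (by norm_num : (0 : ℝ) < 1 / 2) k])
  have hdisj : Pairwise (Disjoint on fun k => A (k + 1) \ A k) := by
    intro i j hij
    simpa only [Function.onFun, hA.disjointed_add_one] using
      disjoint_disjointed A (add_left_injective 1 |>.ne hij)
  have hshell : ∀ k < K, σ (Cube c l \ Cube c ((1 - δ) * l)) ≤
      ENNReal.ofReal D ^ 3 * σ (A (k + 1) \ A k) := by
    intro k hk
    convert hσ.measure_cube_diff_le c hl (a := (1 / 2) ^ k) (by positivity)
      (pow_le_one₀ (by norm_num) (by norm_num)) hδ (by convert hK k hk using 1; ring) using 6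
    ring
  calc K * σ (Cube c l \ Cube c ((1 - δ) * l))
      = ∑ k ∈ Finset.range K, σ (Cube c l \ Cube c ((1 - δ) * l)) := by simp
    _ ≤ ∑ k ∈ Finset.range K, ENNReal.ofReal D ^ 3 * σ (A (k + 1) \ A k) :=
        Finset.sum_le_sum fun k hk => hshell k (Finset.mem_range.1 hk)
    _ = ENNReal.ofReal D ^ 3 * σ (⋃ k ∈ Finset.range K, A (k + 1) \ A k) := by
        rw [← Finset.mul_sum, measure_biUnion_finset (hdisj.set_pairwise _)
          fun k _ => (measurableSet_cube _ _).diff (measurableSet_cube _ _)]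
    _ ≤ ENNReal.ofReal D ^ 3 * σ (Cube c l) := by
        gcongr
        exact iUnion₂_subset fun k _ => sdiff_subset.trans (hAQ (k + 1))

end DoublingWith

/-- Doubling measures do not charge boundary shells: if `σ` is doubling
with doubling constant `D`, then there is `C`, depending only on `n` and `D`, with
`|Q \ (1-δ)Q|_σ ≤ (C / ln(1/δ)) |Q|_σ` for every cube `Q` and every `0 < δ < 1`. -/
theorem statement14
    (n : ℕ) (D : ℝ) (hD : 0 < D) :
    ∃ C : ℝ, 0 < C ∧
      ∀ σ : Measure (Rn n), IsLocallyFiniteMeasure σ → DoublingWith σ D →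
      ∀ (c : Rn n) (l δ : ℝ), 0 < l → 0 < δ → δ < 1 →
        σ (Cube c l \ Cube c ((1 - δ) * l)) ≤
          ENNReal.ofReal (C / Real.log (1 / δ)) * σ (Cube c l) := by
  refine ⟨3 * (D ^ 3 + 1), by positivity, fun σ _ hσ c l δ hl hδ hδ₁ => ?_⟩
  obtain ⟨K, hK, hLK⟩ := exists_nat_forall_le_half_pow_and_log_le hδ
  have hcount : σ (Cube c l \ Cube c ((1 - δ) * l)) * ENNReal.ofReal (K + 1) ≤
      ENNReal.ofReal (D ^ 3 + 1) * σ (Cube c l) :=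
    calc σ (Cube c l \ Cube c ((1 - δ) * l)) * ENNReal.ofReal (K + 1)
        = K * σ (Cube c l \ Cube c ((1 - δ) * l)) + σ (Cube c l \ Cube c ((1 - δ) * l)) := by
          rw [ENNReal.ofReal_add K.cast_nonneg zero_le_one, ENNReal.ofReal_natCast,
            ENNReal.ofReal_one]
          ring
      _ ≤ ENNReal.ofReal D ^ 3 * σ (Cube c l) + σ (Cube c l) :=
          add_le_add (hσ.nat_mul_measure_cube_diff_le c hl hδ.le hK) (measure_mono sdiff_subset)
      _ = ENNReal.ofReal (D ^ 3 + 1) * σ (Cube c l) := by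
          rw [ENNReal.ofReal_add (by positivity) zero_le_one, ENNReal.ofReal_pow hD.le,
            ENNReal.ofReal_one]
          ring
  have hL : 0 < Real.log (1 / δ) := Real.log_pos ((one_lt_div hδ).2 hδ₁)
  calc σ (Cube c l \ Cube c ((1 - δ) * l))
      ≤ ENNReal.ofReal ((D ^ 3 + 1) / (K + 1)) * σ (Cube c l) :=
        ENNReal.le_ofReal_div_mul (by positivity) hcount
    _ ≤ ENNReal.ofReal (3 * (D ^ 3 + 1) / Real.log (1 / δ)) * σ (Cube c l) := by
        gcongr ENNReal.ofReal ?_ * _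
        rw [div_le_div_iff₀ (by positivity) hL]
        nlinarith [pow_pos hD 3]
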